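/- arXiv:2204.10364 — 4 statements merged into one kernel-verified Lean document; each statement's English description precedes it below -/
import Mathlib

section
/- With b ≥ 1, c ∈ [0,1], B = (b+1)/b, β = B^b/(B^b − c), and f_b as defined (f_b(j) = (1−β)B^{j−1} + β for 1 ≤ j ≤ b+1, f_b(j) = (1−c)β for j ≥ b+1), the pair (β, f_b) satisfies the constraint β·w_b(y) ≥ Σ_{i=1}^{y} f_b(i) − z·f_b(y+1) + w_b(z) for all integers y ≥ 1 and z ≥ 1, where w_b is the b-covering rule with curvature c. -/
open Finset

/-- The pair `(β, f_b)` is feasible for the linear program characterizing the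
one-round walk efficiency of the `b`-covering welfare rule. -/
theorem optimal_bCovering_utility_feasible (b : ℕ) (c : ℝ) (hb : 1 ≤ b)
    (hc0 : 0 ≤ c) (hc1 : c ≤ 1)
    (B β : ℝ) (hB : B = ((b : ℝ) + 1) / b) (hβ : β = B ^ b / (B ^ b - c))
    (w : ℕ → ℝ)
    (hw : ∀ j : ℕ, w j = if j ≤ b then (j : ℝ) else (b : ℝ) + (1 - c) * ((j : ℝ) - (b : ℝ)))
    (f : ℕ → ℝ)
    (hf : ∀ j : ℕ, 1 ≤ j → f j =
      if j ≤ b + 1 then (1 - β) * B ^ (j - 1) + β else (1 - c) * β) :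
    ∀ y z : ℕ, 1 ≤ y → 1 ≤ z →
      (∑ i ∈ Finset.Icc 1 y, f i) - (z : ℝ) * f (y + 1) + w z ≤ β * w y := by
  have hb1 : (1:ℝ) ≤ (b:ℝ) := by exact_mod_cast hb
  have hbpos : (0:ℝ) < (b:ℝ) := by linarith
  have hBb : (b:ℝ) * B = (b:ℝ) + 1 := by rw [hB]; field_simp
  have hB1 : 1 < B := by
    rw [hB, lt_div_iff₀ hbpos]; linarith
  have hBbge : 1 < B ^ b := one_lt_pow₀ hB1 (by omega)
  have hden : 0 < B ^ b - c := by linarith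
  have hβ1 : 1 ≤ β := by
    rw [hβ, le_div_iff₀ hden]; linarith
  have hkey : (β - 1) * B ^ b = c * β := by
    rw [hβ]; field_simp; ring
  have hkey2 : (1 - β) * B ^ b + β = (1 - c) * β := by linear_combination -hkey
  -- global bounds on (1-c)*β
  have hcb1 : (1 - c) * β ≤ 1 := by
    nlinarith [mul_nonneg (sub_nonneg.2 hβ1) (sub_nonneg.2 hBbge.le)]
  have hcb2 : 1 - c ≤ (1 - c) * β := by nlinarith
  -- Claim A : exact identity
  have claimA : ∀ y : ℕ, 1 ≤ y →
      (∑ i ∈ Finset.Icc 1 y, f i) + (b:ℝ) * (1 - f (y+1)) = β * w y := by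
    intro y hy
    induction y, hy using Nat.le_induction with
    | base =>
      have h1 : f 1 = (1 - β) * B ^ 0 + β := by
        rw [hf 1 (by omega), if_pos (by omega)]
      have h2 : f 2 = (1 - β) * B ^ 1 + β := by
        rw [hf 2 (by omega), if_pos (by omega)]
      have hw1 : w 1 = 1 := by rw [hw 1, if_pos hb]; norm_num
      simp only [Finset.Icc_self, Finset.sum_singleton]
      rw [h1, h2, hw1]
      simp only [pow_zero, pow_one]
      linear_combination (β - 1) * hBb
    | succ n hn ih =>
      rw [Finset.sum_Icc_succ_top (by omega : 1 ≤ n + 1)]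
      rcases lt_trichotomy n b with h | h | h
      · -- n < b : n+1 ≤ b
        have h1 : f (n+1) = (1 - β) * B ^ n + β := by
          rw [hf (n+1) (by omega), if_pos (by omega)]
          norm_num
        have h2 : f (n+2) = (1 - β) * B ^ (n+1) + β := by
          rw [hf (n+2) (by omega), if_pos (by omega)]
          norm_num
        have hwn : w n = (n:ℝ) := by rw [hw n, if_pos (by omega)]
        have hwn1 : w (n+1) = (n:ℝ) + 1 := by
          rw [hw (n+1), if_pos (by omega)]; push_cast; ring
        rw [h1] at ih ⊢
        rw [show n + 1 + 1 = n + 2 from rfl, h2, hwn1]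
        rw [hwn] at ih
        rw [pow_succ]
        linear_combination ih + (β - 1) * B ^ n * hBb
      · -- n = b
        subst h
        have h1 : f (n+1) = (1 - β) * B ^ n + β := by
          rw [hf (n+1) (by omega), if_pos (by omega)]
          norm_num
        have h2 : f (n+2) = (1 - c) * β := by
          rw [hf (n+2) (by omega), if_neg (by omega)]
        have hwn : w n = (n:ℝ) := by rw [hw n, if_pos (by omega)]
        have hwn1 : w (n+1) = (n:ℝ) + (1 - c) := by
          rw [hw (n+1), if_neg (by omega)]; push_cast; ring
        rw [h1] at ih ⊢
        rw [show n + 1 + 1 = n + 2 from rfl, h2, hwn1]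
        rw [hwn] at ih
        linear_combination ih + ((n:ℝ) + 1) * hkey2
      · -- n > b
        have h1 : f (n+1) = (1 - c) * β := by
          rw [hf (n+1) (by omega), if_neg (by omega)]
        have h2 : f (n+2) = (1 - c) * β := by
          rw [hf (n+2) (by omega), if_neg (by omega)]
        have hwn : w n = (b:ℝ) + (1 - c) * ((n:ℝ) - (b:ℝ)) := by
          rw [hw n, if_neg (by omega)]
        have hwn1 : w (n+1) = (b:ℝ) + (1 - c) * ((n:ℝ) + 1 - (b:ℝ)) := by
          rw [hw (n+1), if_neg (by omega)]; push_cast; ring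
        rw [h1] at ih ⊢
        rw [show n + 1 + 1 = n + 2 from rfl, h2, hwn1]
        rw [hwn] at ih
        linear_combination ih
  -- bounds on f (y+1)
  intro y z hy hz
  have hFle : f (y+1) ≤ 1 := by
    by_cases hyb : y + 1 ≤ b + 1
    · rw [hf (y+1) (by omega), if_pos hyb]
      have h1 : (1:ℝ) ≤ B ^ y := one_le_pow₀ hB1.le
      norm_num
      nlinarith [mul_nonneg (sub_nonneg.2 hβ1) (sub_nonneg.2 h1)]
    · rw [hf (y+1) (by omega), if_neg hyb]; exact hcb1
  have hFge : 1 - c ≤ f (y+1) := by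
    by_cases hyb : y + 1 ≤ b + 1
    · rw [hf (y+1) (by omega), if_pos hyb]
      have hpw : B ^ y ≤ B ^ b := pow_le_pow_right₀ hB1.le (by omega)
      norm_num
      nlinarith [mul_nonneg (sub_nonneg.2 hβ1) (sub_nonneg.2 hpw)]
    · rw [hf (y+1) (by omega), if_neg hyb]; exact hcb2
  rw [← claimA y hy]
  have hzb : (1:ℝ) ≤ (z:ℝ) := by exact_mod_cast hz
  rw [hw z]
  by_cases hzle : z ≤ b
  · rw [if_pos hzle]
    have : (z:ℝ) ≤ (b:ℝ) := by exact_mod_cast hzle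
    nlinarith [mul_nonneg (sub_nonneg.2 this) (sub_nonneg.2 hFle)]
  · rw [if_neg hzle]
    have : (b:ℝ) ≤ (z:ℝ) := by exact_mod_cast (le_of_not_ge hzle)
    nlinarith [mul_nonneg (sub_nonneg.2 this) (sub_nonneg.2 hFge)]
end

section
/- Let w be a submodular welfare rule with w(0)=0, w(1)=1, and curvature at most c ∈ [0,1] (i.e., w(j+1) − w(j) ≥ 1 − c for all j). Define the marginal contribution utility f(j) = w(j) − w(j−1). Then for every y ≥ 1 and z ≥ 0: Σ_{i=1}^{y} f(i) − z·f(y+1) + w(z) ≤ (1 + c)·w(y). -/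
open Finset

/-- For a submodular welfare rule of curvature at most `c` and the marginal contribution
utility `f(j) = w(j) - w(j-1)`, the one-round LP quantity is bounded by `(1+c)·w(y)`. -/
theorem marginal_contribution_one_round_bound (w : ℕ → ℝ) (c : ℝ)
    (hc0 : 0 ≤ c) (hc1 : c ≤ 1)
    (h0 : w 0 = 0) (h1 : w 1 = 1)
    (hmono : ∀ j, w j ≤ w (j + 1))
    (hsub : ∀ j k, j ≤ k → w (k + 1) - w k ≤ w (j + 1) - w j)
    (hcurv : ∀ j : ℕ, 1 ≤ j → 1 - c ≤ w j - w (j - 1))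
    (f : ℕ → ℝ) (hf : ∀ j : ℕ, 1 ≤ j → f j = w j - w (j - 1)) :
    ∀ y z : ℕ, 1 ≤ y →
      (∑ i ∈ Finset.Icc 1 y, f i) - (z : ℝ) * f (y + 1) + w z ≤ (1 + c) * w y := by
  intro y z hy
  have hm : Monotone w := monotone_nat_of_le_succ hmono
  have key : ∀ n, (∑ i ∈ Finset.Icc 1 n, f i) = w n := by
    intro n
    induction n with
    | zero => simp [h0]
    | succ k ih =>
      rw [Finset.sum_Icc_succ_top (by omega : 1 ≤ k + 1), ih, hf (k + 1) (by omega)]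
      simp
  have hub : ∀ n : ℕ, w n ≤ n := by
    intro n
    induction n with
    | zero => simp [h0]
    | succ k ih =>
      have := hsub 0 k (Nat.zero_le k)
      push_cast
      rw [h0, h1] at this
      linarith
  have hfy : f (y + 1) = w (y + 1) - w y := by
    rw [hf (y + 1) (by omega)]; simp
  have hfy_ge : 1 - c ≤ f (y + 1) := by
    have := hcurv (y + 1) (by omega)
    simpa [hfy] using this
  rw [key y]
  have hwy : w y ≤ (y : ℝ) := hub y
  rcases le_or_gt z y with hzy | hzy
  · -- z ≤ y
    have hz0 : (0 : ℝ) ≤ (z : ℝ) := Nat.cast_nonneg z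
    have h1 : (z : ℝ) * (1 - c) ≤ (z : ℝ) * f (y + 1) :=
      mul_le_mul_of_nonneg_left hfy_ge hz0
    have h2 : w z ≤ (z : ℝ) := hub z
    have h3 : w z ≤ w y := hm hzy
    nlinarith [mul_nonneg (sub_nonneg.2 hc1) (sub_nonneg.2 h2),
      mul_nonneg hc0 (sub_nonneg.2 h3)]
  · -- z > y
    have aux : ∀ d : ℕ, w (y + d) ≤ w y + d * f (y + 1) := by
      intro d
      induction d with
      | zero => simp
      | succ k ih =>
        have hstep : w (y + k + 1) - w (y + k) ≤ f (y + 1) := by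
          rw [hfy]; exact hsub y (y + k) (Nat.le_add_right y k)
        push_cast
        have : y + (k + 1) = y + k + 1 := by omega
        rw [this]
        linarith
    have hd := aux (z - y)
    have hzd : z = y + (z - y) := by omega
    rw [hzd]
    have hyf : (y : ℝ) * (1 - c) ≤ (y : ℝ) * f (y + 1) :=
      mul_le_mul_of_nonneg_left hfy_ge (Nat.cast_nonneg y)
    have hcast : ((y + (z - y) : ℕ) : ℝ) = (y : ℝ) + ((z - y : ℕ) : ℝ) := by push_cast; ring
    rw [hcast]
    nlinarith [mul_nonneg (sub_nonneg.2 hc1) (sub_nonneg.2 hwy)]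
end

section
/- Let f : ℕ≥1 → ℝ≥0 be a utility rule with f(1) = 1 whose series Σ f(i) converges, with infimum m = inf_i f(i). Then sup over y ≥ 1 and z ∈ {0,1} of [Σ_{i=1}^{y} f(i) − z·min_{1≤i≤y+1} f(i) + min(1,z)] equals Σ_{i=1}^{∞} f(i) − m + 1, assuming f is non-increasing. -/
open Finset

/-- For a non-increasing utility rule `f` with `f 1 = 1`, nonnegative values and a
convergent series, the supremum of the one-round dual expressions over `y ≥ 1` and
`z ∈ {0,1}` equals `Σ f(i) − inf f + 1` (set covering welfare). -/
theorem setCovering_dual_sup (f : ℕ → ℝ)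
    (hnonneg : ∀ j : ℕ, 1 ≤ j → 0 ≤ f j)
    (h1 : f 1 = 1)
    (hmono : ∀ j k : ℕ, 1 ≤ j → j ≤ k → f k ≤ f j)
    (hsum : Summable (fun i : ℕ => f (i + 1))) :
    IsLUB
      {x : ℝ | ∃ y : ℕ, 1 ≤ y ∧ ∃ z : ℕ, z ≤ 1 ∧
        x = (∑ i ∈ Finset.Icc 1 y, f i)
              - (z : ℝ) * ((Finset.Icc 1 (y + 1)).inf' ⟨1, by simp⟩ f)
              + min 1 (z : ℝ)}
      ((∑' i : ℕ, f (i + 1)) - (⨅ i : ℕ, f (i + 1)) + 1) := by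
  set S : ℝ := ∑' i : ℕ, f (i + 1) with hS
  set m : ℝ := ⨅ i : ℕ, f (i + 1) with hm
  have hbdd : BddBelow (Set.range fun i : ℕ => f (i + 1)) := by
    refine ⟨0, ?_⟩
    rintro x ⟨i, rfl⟩
    exact hnonneg _ (by omega)
  have hmle : ∀ y : ℕ, m ≤ f (y + 1) := fun y => ciInf_le hbdd y
  have hm1 : m ≤ 1 := by
    have := hmle 0
    simpa [h1] using this
  have hm0 : 0 ≤ m := le_ciInf fun i => hnonneg _ (by omega)
  have hinf' : ∀ y : ℕ, 1 ≤ y →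
      (Finset.Icc 1 (y + 1)).inf' ⟨1, by simp⟩ f = f (y + 1) := by
    intro y hy
    apply le_antisymm
    · exact Finset.inf'_le f (by simp [Finset.mem_Icc])
    · apply Finset.le_inf'
      intro i hi
      simp only [Finset.mem_Icc] at hi
      exact hmono i (y + 1) hi.1 hi.2
  have hsumIcc : ∀ y : ℕ, (∑ i ∈ Finset.Icc 1 y, f i)
      = ∑ i ∈ Finset.range y, f (i + 1) := by
    intro y
    rw [show Finset.Icc 1 y = Finset.Ico 1 (y + 1) by rfl, Finset.sum_Ico_eq_sum_range]
    simp [add_comm]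
  have hpartial : ∀ y : ℕ, (∑ i ∈ Finset.range y, f (i + 1)) ≤ S :=
    fun y => Summable.sum_le_tsum _ (fun i _ => hnonneg _ (by omega)) hsum
  constructor
  · rintro x ⟨y, hy, z, hz, rfl⟩
    interval_cases z
    · simp only [Nat.cast_zero, zero_mul, sub_zero, min_def]
      rw [hsumIcc]
      have := hpartial y
      norm_num
      linarith
    · simp only [Nat.cast_one, one_mul, min_self]
      rw [hsumIcc, hinf' y hy]
      have := hpartial y
      have := hmle y
      linarith
  · intro b hb
    have hmem : ∀ y : ℕ, 1 ≤ y →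
        (∑ i ∈ Finset.range y, f (i + 1)) - f (y + 1) + 1 ≤ b := by
      intro y hy
      apply hb
      exact ⟨y, hy, 1, le_refl 1, by
        rw [hsumIcc, hinf' y hy]; norm_num⟩
    have hanti : Antitone (fun i : ℕ => f (i + 1)) := by
      intro i j hij
      exact hmono (i + 1) (j + 1) (by omega) (by omega)
    have htend1 : Filter.Tendsto (fun y : ℕ => ∑ i ∈ Finset.range y, f (i + 1))
        Filter.atTop (nhds S) := hsum.hasSum.tendsto_sum_nat
    have htend2 : Filter.Tendsto (fun y : ℕ => f (y + 1)) Filter.atTop (nhds m) :=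
      tendsto_atTop_ciInf hanti hbdd
    have htend : Filter.Tendsto
        (fun y : ℕ => (∑ i ∈ Finset.range y, f (i + 1)) - f (y + 1) + 1)
        Filter.atTop (nhds (S - m + 1)) := by
      exact (htend1.sub htend2).add tendsto_const_nhds
    refine le_of_tendsto htend ?_
    filter_upwards [Filter.eventually_ge_atTop 1] with y hy using hmem y hy
end

section
/- Fix χ ≥ 1/(e−1). Define f_χ : ℕ≥1 → ℝ recursively by f_χ(1) = 1 and f_χ(j+1) = max{j·f_χ(j) − χ, 0}. Then f_χ has the closed form f_χ(j) = max{(j−1)!·(1 − χ·Σ_{τ=1}^{j−1} 1/τ!), 0} for all j ≥ 1. -/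
open Finset

/-- Closed form of the recursively defined Pareto-optimal utility rule for set covering. -/
theorem pareto_utility_closed_form (χ : ℝ) (hχ : 1 / (Real.exp 1 - 1) ≤ χ)
    (f : ℕ → ℝ) (h1 : f 1 = 1)
    (hrec : ∀ j : ℕ, 1 ≤ j → f (j + 1) = max ((j : ℝ) * f j - χ) 0) :
    ∀ j : ℕ, 1 ≤ j →
      f j = max ((Nat.factorial (j - 1) : ℝ) *
        (1 - χ * ∑ τ ∈ Finset.Icc 1 (j - 1), 1 / (Nat.factorial τ : ℝ))) 0 := by
  have he : (0:ℝ) < Real.exp 1 - 1 := by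
    have := Real.exp_one_gt_d9; linarith
  have hχ0 : 0 < χ := lt_of_lt_of_le (div_pos one_pos he) hχ
  intro j hj
  induction j, hj using Nat.le_induction with
  | base => simp [h1]
  | succ n hn ih =>
    obtain ⟨m, rfl⟩ : ∃ m, n = m + 1 := ⟨n - 1, (Nat.succ_pred_eq_of_pos hn).symm⟩
    rw [hrec (m + 1) hn, ih]
    simp only [Nat.add_sub_cancel]
    set A : ℝ := (Nat.factorial m : ℝ) *
        (1 - χ * ∑ τ ∈ Finset.Icc 1 m, 1 / (Nat.factorial τ : ℝ)) with hA
    have hsum : ∑ τ ∈ Finset.Icc 1 (m + 1), 1 / (Nat.factorial τ : ℝ)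
        = (∑ τ ∈ Finset.Icc 1 m, 1 / (Nat.factorial τ : ℝ)) + 1 / (Nat.factorial (m+1) : ℝ) := by
      rw [Finset.sum_Icc_succ_top (Nat.le_add_left 1 m)]
    have hfacpos : (0:ℝ) < (Nat.factorial (m+1) : ℝ) := by
      exact_mod_cast Nat.factorial_pos (m+1)
    have hfac : (Nat.factorial (m+1) : ℝ) = (m+1) * (Nat.factorial m : ℝ) := by
      push_cast [Nat.factorial_succ]; ring
    have hgoal : (Nat.factorial (m + 1) : ℝ) *
        (1 - χ * ∑ τ ∈ Finset.Icc 1 (m + 1), 1 / (Nat.factorial τ : ℝ))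
        = ((m:ℝ) + 1) * A - χ := by
      simp only [hsum, hA, hfac]
      field_simp
      ring
    rw [hgoal]
    rcases le_or_gt 0 A with hA0 | hA0
    · rw [max_eq_left hA0]
      push_cast
      simp only [one_div]
    · rw [max_eq_right hA0.le]
      have h1 : max (((m:ℝ)+1) * 0 - χ) 0 = 0 := by
        rw [max_eq_right]; linarith
      have h2 : ((m:ℝ)+1) * A - χ ≤ 0 := by
        nlinarith [hA0, hχ0, (by positivity : (0:ℝ) < (m:ℝ)+1)]
      rw [max_eq_right h2]
      push_cast
      exact h1
end
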